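/- Let R be a ring with involution, G a finitely generated stably free R-module, and λ a hermitian form on G whose adjoint λ̂ : G → G* is an isomorphism. Define A_3 : G ⊗_R G → Hom_R(G*, G) by (u ⊗ v) ↦ (ξ ↦ ξ(u)·v). Then A_3 is injective on the subgroup of symmetric tensors, and the element λ̂⁻¹ viewed via A_3 corresponds to the 'diagonal' class of the form. Consequently, if two non-singular hermitian forms (G, λ) and (G', λ') are isometric via Φ, then Φ λ̂⁻¹ Φ* − λ̂'⁻¹ = 0 in Hom_R(G'*, G'). -/

import Mathlib

/-!
`A₃` is `dualTensorHom` precomposed with `eval ⊗ id`, and both are bijective for a finitely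
generated projective module (stably free modules are projective). Moreover `A₃` turns the flip
of `G ⊗ G` into transposition of maps `G* → G`, so `ê⁻¹` comes from a symmetric tensor as soon as
the form is symmetric. Since the form is `R`-bilinear, being hermitian forces this: take a dual
basis `x = ∑ ê (b i) x • g i`; as `star` is multiplicative, the hermitian condition gives the
flipped expansion `x = ∑ ê x (b i) • g i`, and comparing it with `y = ∑ ê y (g i) • b i` gives
symmetry. The last claim is the naturality of `ê⁻¹` under isometries.
-/

open TensorProduct

/-- The map `A₃ : G ⊗ G → Hom(G*, G)`, `u ⊗ v ↦ (ξ ↦ ξ(u) • v)`. -/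
noncomputable def A3 (R G : Type*) [CommRing R] [AddCommGroup G] [Module R G] :
    G ⊗[R] G →ₗ[R] (Module.Dual R G →ₗ[R] G) :=
  TensorProduct.lift (LinearMap.mk₂ R
    (fun u v => (Module.Dual.eval R G u).smulRight v)
    (fun u u' v => by ext ξ; simp [add_smul]
    )
    (fun r u v => by ext ξ; simp [mul_smul]
    )
    (fun u v v' => by ext ξ; simp [smul_add]
    )
    (fun r u v => by
      ext ξ
      simp only [LinearMap.smulRight_apply, LinearMap.smul_apply, Module.Dual.eval_apply]
      exact smul_comm _ _ _))

section A3

variable {R G : Type*} [CommRing R] [AddCommGroup G] [Module R G]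

@[simp]
lemma A3_tmul (u v : G) (ξ : Module.Dual R G) : A3 R G (u ⊗ₜ[R] v) ξ = ξ u • v := by
  simp [A3]

lemma A3_eq_dualTensorHom_comp_rTensor :
    A3 R G = dualTensorHom R (Module.Dual R G) G ∘ₗ (Module.Dual.eval R G).rTensor G := by
  ext u v ξ
  simp

lemma A3_bijective [Module.Finite R G] [Module.Projective R G] : Function.Bijective (A3 R G) := by
  rw [A3_eq_dualTensorHom_comp_rTensor, LinearMap.coe_comp]
  exact dualTensorHom_bijective_of_finite_projective_right.comp
    ((Module.evalEquiv R G).rTensor G).bijective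

lemma apply_A3_comm (t : G ⊗[R] G) (ξ η : Module.Dual R G) :
    η (A3 R G (TensorProduct.comm R G G t) ξ) = ξ (A3 R G t η) := by
  induction t with
  | zero => simp
  | tmul u v => simp [mul_comm]
  | add t₁ t₂ h₁ h₂ => simp only [map_add, LinearMap.add_apply, h₁, h₂]

lemma comm_eq_self_iff_apply_A3_symm [Module.Finite R G] [Module.Projective R G]
    (t : G ⊗[R] G) :
    TensorProduct.comm R G G t = t ↔ ∀ ξ η : Module.Dual R G, η (A3 R G t ξ) = ξ (A3 R G t η) := by
  rw [← A3_bijective.injective.eq_iff, LinearMap.ext_iff]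
  refine forall_congr' fun ξ => ?_
  rw [← (Module.eval_apply_injective R (V := G)).eq_iff, LinearMap.ext_iff]
  simp [apply_A3_comm, eq_comm]

end A3

lemma Module.Projective.of_prod_equiv_pi {R G : Type*} [CommRing R] [AddCommGroup G] [Module R G]
    {n m : ℕ} (ψ : (G × (Fin n → R)) ≃ₗ[R] (Fin m → R)) : Module.Projective R G :=
  have : Module.Projective R (G × (Fin n → R)) := .of_equiv' ψ.symm
  .of_split (LinearMap.inl R G (Fin n → R)) (LinearMap.fst R G (Fin n → R))
    (LinearMap.fst_comp_inl R G _)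

lemma Module.exists_sum_dual_smul_eq (R G : Type*) [CommRing R] [AddCommGroup G] [Module R G]
    [Module.Finite R G] [Module.Projective R G] :
    ∃ (n : ℕ) (f : Fin n → Module.Dual R G) (g : Fin n → G), ∀ x, ∑ i, f i x • g i = x := by
  obtain ⟨n, p, s, -, -, hps⟩ := Module.Finite.exists_comp_eq_id_of_projective R G
  refine ⟨n, fun i => LinearMap.proj i ∘ₗ s, fun i => p fun j => if i = j then 1 else 0,
    fun x => ?_⟩
  simpa [← LinearMap.pi_apply_eq_sum_univ] using LinearMap.congr_fun hps x

lemma apply_comm_of_hermitian {R G : Type*} [CommRing R] [StarRing R] [AddCommGroup G]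
    [Module R G] [Module.Finite R G] [Module.Projective R G]
    (e : G ≃ₗ[R] Module.Dual R G) (hherm : ∀ x y, e x y = star (e y x)) (x y : G) :
    e x y = e y x := by
  obtain ⟨n, f, g, hfg⟩ := Module.exists_sum_dual_smul_eq R G
  set b : Fin n → G := fun i => e.symm (f i)
  have hb : ∀ y, ∑ i, e y (g i) • b i = y := fun y => e.injective <| by
    ext z
    conv_rhs => rw [← hfg z]
    simp [b, mul_comm]
  have hb_flip : ∀ x, ∑ i, e x (b i) • g i = x := fun x => e.injective <| by
    ext y
    calc e (∑ i, e x (b i) • g i) y = ∑ i, e x (b i) * e (g i) y := by simp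
      _ = ∑ i, star (e (b i) x * e y (g i)) :=
          Finset.sum_congr rfl fun i _ => by rw [star_mul', ← hherm, ← hherm, mul_comm]
      _ = star (e y (∑ i, f i x • g i)) := by simp [b, star_sum]
      _ = e x y := by rw [hfg, ← hherm]
  calc e x y = e x (∑ i, e y (g i) • b i) := by rw [hb]
    _ = e y (∑ i, e x (b i) • g i) := by simp [mul_comm]
    _ = e y x := by rw [hb_flip]

lemma comp_symm_comp_dualMap_eq_symm {R G G' : Type*} [CommRing R] [AddCommGroup G] [Module R G]
    [AddCommGroup G'] [Module R G'] (e : G ≃ₗ[R] Module.Dual R G) (e' : G' ≃ₗ[R] Module.Dual R G')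
    (Φ : G ≃ₗ[R] G') (hΦ : ∀ x y, e' (Φ x) (Φ y) = e x y) :
    (Φ : G →ₗ[R] G') ∘ₗ (e.symm : Module.Dual R G →ₗ[R] G) ∘ₗ (Φ : G →ₗ[R] G').dualMap =
      (e'.symm : Module.Dual R G' →ₗ[R] G') := by
  ext ξ'
  apply e'.injective
  ext x'
  obtain ⟨x, rfl⟩ := Φ.surjective x'
  simp [hΦ]

theorem stmt12_general {R : Type*} [CommRing R] [StarRing R] {G G' : Type*}
    [AddCommGroup G] [Module R G] [AddCommGroup G'] [Module R G']
    (hfg : Module.Finite R G)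
    (hsf : ∃ n m : ℕ, Nonempty ((G × (Fin n → R)) ≃ₗ[R] (Fin m → R)))
    (lam : G → G → R) (lam' : G' → G' → R)
    (hherm : ∀ x y : G, lam y x = star (lam x y))
    (e : G ≃ₗ[R] Module.Dual R G) (he : ∀ x y : G, e y x = lam x y)
    (e' : G' ≃ₗ[R] Module.Dual R G') (he' : ∀ x y : G', e' y x = lam' x y)
    (Φ : G ≃ₗ[R] G') (hiso : ∀ x y : G, lam' (Φ x) (Φ y) = lam x y) :
    (∀ t₁ t₂ : G ⊗[R] G, TensorProduct.comm R G G t₁ = t₁ →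
      TensorProduct.comm R G G t₂ = t₂ → A3 R G t₁ = A3 R G t₂ → t₁ = t₂) ∧
    (∃ t : G ⊗[R] G, TensorProduct.comm R G G t = t ∧
      A3 R G t = (e.symm : Module.Dual R G →ₗ[R] G)) ∧
    (Φ : G →ₗ[R] G').comp ((e.symm : Module.Dual R G →ₗ[R] G).comp
        ((Φ : G →ₗ[R] G').dualMap)) = (e'.symm : Module.Dual R G' →ₗ[R] G') := by
  obtain ⟨n, m, ⟨ψ⟩⟩ := hsf
  have := Module.Projective.of_prod_equiv_pi ψ
  have he_symm := apply_comm_of_hermitian e fun x y => by rw [he, he, hherm]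
  obtain ⟨t, ht⟩ := A3_bijective.surjective (e.symm : Module.Dual R G →ₗ[R] G)
  refine ⟨fun t₁ t₂ _ _ h => A3_bijective.injective h, ⟨t, ?_, ht⟩,
    comp_symm_comp_dualMap_eq_symm e e' Φ fun x y => by rw [he', he, hiso]⟩
  rw [comm_eq_self_iff_apply_A3_symm, ht]
  intro ξ η
  simpa using he_symm (e.symm η) (e.symm ξ)

/-- Let `G` be a finitely generated stably free module over a ring with involution and
`lam` a hermitian form on `G` whose adjoint `ê : G ≃ G*` is an isomorphism.  Then `A₃`
is injective on symmetric tensors, `ê⁻¹` is in the image under `A₃` of a symmetric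
tensor (the "diagonal class" of the form), and consequently if `(G, lam)` and
`(G', lam')` are non-singular hermitian forms which are isometric via `Φ`, then
`Φ ∘ ê⁻¹ ∘ Φ* − ê'⁻¹ = 0` in `Hom(G'*, G')`. -/
theorem stmt12 {R : Type*} [CommRing R] [StarRing R] {G G' : Type*}
    [AddCommGroup G] [Module R G] [AddCommGroup G'] [Module R G']
    (hfg : Module.Finite R G)
    (hsf : ∃ n m : ℕ, Nonempty ((G × (Fin n → R)) ≃ₗ[R] (Fin m → R)))
    (lam : G → G → R) (lam' : G' → G' → R)
    (hherm : ∀ x y : G, lam y x = star (lam x y))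
    (hherm' : ∀ x y : G', lam' y x = star (lam' x y))
    (e : G ≃ₗ[R] Module.Dual R G) (he : ∀ x y : G, e y x = lam x y)
    (e' : G' ≃ₗ[R] Module.Dual R G') (he' : ∀ x y : G', e' y x = lam' x y)
    (Φ : G ≃ₗ[R] G') (hiso : ∀ x y : G, lam' (Φ x) (Φ y) = lam x y) :
    (∀ t₁ t₂ : G ⊗[R] G, TensorProduct.comm R G G t₁ = t₁ →
      TensorProduct.comm R G G t₂ = t₂ → A3 R G t₁ = A3 R G t₂ → t₁ = t₂) ∧
    (∃ t : G ⊗[R] G, TensorProduct.comm R G G t = t ∧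
      A3 R G t = (e.symm : Module.Dual R G →ₗ[R] G)) ∧
    (Φ : G →ₗ[R] G').comp ((e.symm : Module.Dual R G →ₗ[R] G).comp
        ((Φ : G →ₗ[R] G').dualMap)) = (e'.symm : Module.Dual R G' →ₗ[R] G') :=
  stmt12_general hfg hsf lam lam' hherm e he e' he' Φ hiso
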